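/- Let σ > 0, β ∈ ℝ, Ω ∈ ℝ. Then lim_{L→∞} (4π^(1/2)σ/L²) Σ_{n,m=0}^∞ exp[ −σ² ( Ω + (2π/L)( (n+½) e^β + (m+½) e^(−β) ) )² ] = (1/(2πσ)) ( e^(−σ²Ω²)/π^(1/2) − σΩ erfc(σΩ) ). In particular the limit is independent of β. -/

import Mathlib

open Filter
open scoped Topology

/-- The complementary error function `erfc(x) = (2/√π) ∫_x^∞ e^{−t²} dt`. -/
noncomputable def erfc (x : ℝ) : ℝ :=
  (2 / Real.sqrt Real.pi) * ∫ t in Set.Ioi x, Real.exp (-t ^ 2)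

namespace TwistedAux

open MeasureTheory Set

/-- Gaussian tail integral. -/
noncomputable def E (k s : ℝ) : ℝ := ∫ t in Ioi s, Real.exp (-k * t ^ 2)

/-- Staircase midpoint function. -/
noncomputable def step (c u : ℝ) : ℝ := c * ((⌈u / c⌉ : ℝ) - 1 / 2)

lemma E_nonneg (k s : ℝ) : 0 ≤ E k s :=
  setIntegral_nonneg measurableSet_Ioi fun _ _ => (Real.exp_pos _).le

lemma E_eq (hk : 0 < k) (s : ℝ) :
    E k s = E k 0 - ∫ t in (0:ℝ)..s, Real.exp (-k * t ^ 2) := by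
  have hint : Integrable (fun t : ℝ => Real.exp (-k * t ^ 2)) := integrable_exp_neg_mul_sq hk
  have h1 := intervalIntegral.integral_Iic_add_Ioi (f := fun t : ℝ => Real.exp (-k * t ^ 2))
    hint.integrableOn hint.integrableOn (μ := volume) (b := s)
  have h2 := intervalIntegral.integral_Iic_add_Ioi (f := fun t : ℝ => Real.exp (-k * t ^ 2))
    hint.integrableOn hint.integrableOn (μ := volume) (b := (0:ℝ))
  have h3 := intervalIntegral.integral_Iic_sub_Iic (f := fun t : ℝ => Real.exp (-k * t ^ 2))
    hint.integrableOn hint.integrableOn (μ := volume) (a := (0:ℝ)) (b := s)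
  simp only [E]
  linarith [h1, h2, h3]

lemma hasDerivAt_E (hk : 0 < k) (s : ℝ) :
    HasDerivAt (E k) (-Real.exp (-k * s ^ 2)) s := by
  have hint : Integrable (fun t : ℝ => Real.exp (-k * t ^ 2)) := integrable_exp_neg_mul_sq hk
  have hc : Continuous (fun t : ℝ => Real.exp (-k * t ^ 2)) := by fun_prop
  have h : HasDerivAt (fun u : ℝ => ∫ t in (0:ℝ)..u, Real.exp (-k * t ^ 2))
      (Real.exp (-k * s ^ 2)) s :=
    intervalIntegral.integral_hasDerivAt_right hint.intervalIntegrable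
      hc.aestronglyMeasurable.stronglyMeasurableAtFilter hc.continuousAt
  have := (hasDerivAt_const s (E k 0)).sub h
  simp only [zero_sub] at this
  exact this.congr_deriv rfl |>.congr_of_eventuallyEq
    (Filter.Eventually.of_forall fun u => (E_eq hk u))

lemma hasDerivAt_gauss {k : ℝ} (hk : k ≠ 0) (s : ℝ) :
    HasDerivAt (fun t : ℝ => -Real.exp (-k * t ^ 2) / (2 * k)) (s * Real.exp (-k * s ^ 2)) s := by
  have h1 : HasDerivAt (fun t : ℝ => -k * t ^ 2) (-k * (2 * s)) s := by
    simpa using ((hasDerivAt_pow 2 s).const_mul (-k))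
  have h2 := (h1.exp).neg.div_const (2 * k)
  exact h2.congr_deriv (by rw [div_eq_iff (mul_ne_zero two_ne_zero hk)]; ring)

lemma tendsto_gauss_atTop {k : ℝ} (hk : 0 < k) :
    Tendsto (fun t : ℝ => Real.exp (-k * t ^ 2)) atTop (𝓝 0) := by
  have h1 : Tendsto (fun t : ℝ => -k * t ^ 2) atTop atBot := by
    apply Tendsto.const_mul_atTop_of_neg (by linarith : -k < 0)
    exact tendsto_pow_atTop (by norm_num)
  exact Real.tendsto_exp_atBot.comp h1

lemma integral_id_mul_gauss {k : ℝ} (hk : 0 < k) (a : ℝ) :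
    ∫ t in Ioi a, t * Real.exp (-k * t ^ 2) = Real.exp (-k * a ^ 2) / (2 * k) := by
  have hint : IntegrableOn (fun t : ℝ => t * Real.exp (-k * t ^ 2)) (Ioi a) :=
    (integrable_mul_exp_neg_mul_sq hk).integrableOn
  have := integral_Ioi_of_hasDerivAt_of_tendsto' (m := 0)
    (f := fun t : ℝ => -Real.exp (-k * t ^ 2) / (2 * k))
    (fun x _ => hasDerivAt_gauss hk.ne' x) hint ?_
  · rw [this]; ring_nf
  · have := (tendsto_gauss_atTop hk).neg.div_const (2 * k)
    simpa using this

lemma mul_E_le {k : ℝ} (hk : 0 < k) {s : ℝ} (hs : 0 < s) :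
    s * E k s ≤ Real.exp (-k * s ^ 2) / (2 * k) := by
  have hint : IntegrableOn (fun t : ℝ => t * Real.exp (-k * t ^ 2)) (Ioi s) :=
    (integrable_mul_exp_neg_mul_sq hk).integrableOn
  have h1 : E k s ≤ ∫ t in Ioi s, (1 / s) * (t * Real.exp (-k * t ^ 2)) := by
    apply setIntegral_mono_on ((integrable_exp_neg_mul_sq hk).integrableOn)
      (hint.const_mul (1 / s)) measurableSet_Ioi
    intro t ht
    rw [mem_Ioi] at ht
    rw [one_div, inv_mul_eq_div, le_div_iff₀ hs]
    have := (Real.exp_pos (-k * t ^ 2)).le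
    nlinarith
  rw [integral_const_mul, integral_id_mul_gauss hk] at h1
  calc s * E k s ≤ s * (1 / s * (Real.exp (-k * s ^ 2) / (2 * k))) := by
        exact mul_le_mul_of_nonneg_left h1 hs.le
    _ = Real.exp (-k * s ^ 2) / (2 * k) := by field_simp

lemma tendsto_mul_E {k : ℝ} (hk : 0 < k) :
    Tendsto (fun s => s * E k s) atTop (𝓝 0) := by
  have hup : Tendsto (fun s : ℝ => Real.exp (-k * s ^ 2) / (2 * k)) atTop (𝓝 0) := by
    have h1 : Tendsto (fun t : ℝ => -k * t ^ 2) atTop atBot :=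
      Tendsto.const_mul_atTop_of_neg (by linarith : -k < 0) (tendsto_pow_atTop (by norm_num))
    simpa using (Real.tendsto_exp_atBot.comp h1).div_const (2 * k)
  apply tendsto_of_tendsto_of_tendsto_of_le_of_le' tendsto_const_nhds hup
  · filter_upwards [eventually_gt_atTop (0:ℝ)] with s hs
    exact mul_nonneg hs.le (E_nonneg k s)
  · filter_upwards [eventually_gt_atTop (0:ℝ)] with s hs
    exact mul_E_le hk hs

lemma integral_E {k : ℝ} (hk : 0 < k) (a : ℝ) :
    ∫ s in Ioi a, E k s = Real.exp (-k * a ^ 2) / (2 * k) - a * E k a := by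
  have hderiv : ∀ s ∈ Ici a, HasDerivAt
      (fun s : ℝ => s * E k s + -Real.exp (-k * s ^ 2) / (2 * k)) (E k s) s := by
    intro s _
    have h := ((hasDerivAt_id s).mul (hasDerivAt_E hk s)).add (hasDerivAt_gauss hk.ne' s)
    exact h.congr_deriv (by simp only [id_eq, one_mul]; ring)
  have htend : Tendsto (fun s : ℝ => s * E k s + -Real.exp (-k * s ^ 2) / (2 * k)) atTop (𝓝 0) := by
    have := (tendsto_mul_E hk).add ((tendsto_gauss_atTop hk).neg.div_const (2 * k))
    simpa using this
  have := integral_Ioi_of_hasDerivAt_of_nonneg' (l := 0) hderiv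
    (fun s _ => E_nonneg k s) htend
  rw [this]
  ring

lemma integral_comp_add_right_Ioi (g : ℝ → ℝ) (a d : ℝ) :
    (∫ x in Ioi a, g (x + d)) = ∫ x in Ioi (a + d), g x := by
  rw [← integral_indicator measurableSet_Ioi, ← integral_indicator measurableSet_Ioi,
    ← integral_add_right_eq_self (fun x => indicator (Ioi (a + d)) g x) d]
  congr 1
  ext x
  by_cases hx : x ∈ Ioi a
  · rw [indicator_of_mem hx, indicator_of_mem (by simpa [mem_Ioi] using add_lt_add_right hx.out d)]
  · rw [indicator_of_notMem hx, indicator_of_notMem (by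
      simp only [mem_Ioi] at hx ⊢; intro h; exact hx (by linarith))]

lemma integrableOn_gauss2d {k a b : ℝ} (hk : 0 < k) (ha : 0 < a) (hb : 0 < b) (Ω : ℝ) :
    IntegrableOn (fun z : ℝ × ℝ => Real.exp (-k * (Ω + z.1 * a + z.2 * b) ^ 2))
      (Ioi 0 ×ˢ Ioi 0) := by
  have h1 : Integrable (fun u : ℝ => Real.exp (-(k * a ^ 2 / 2) * u ^ 2)) :=
    integrable_exp_neg_mul_sq (by positivity)
  have h2 : Integrable (fun v : ℝ => Real.exp (-(k * b ^ 2 / 2) * v ^ 2)) :=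
    integrable_exp_neg_mul_sq (by positivity)
  have hprod : Integrable (fun z : ℝ × ℝ =>
      Real.exp (k * Ω ^ 2) * (Real.exp (-(k * a ^ 2 / 2) * z.1 ^ 2) *
        Real.exp (-(k * b ^ 2 / 2) * z.2 ^ 2))) := by
    rw [MeasureTheory.Measure.volume_eq_prod]
    exact (h1.mul_prod h2).const_mul _
  apply (hprod.integrableOn.mono_set (subset_univ _)).mono'
  · exact (Continuous.aestronglyMeasurable (by fun_prop))
  · rw [ae_restrict_iff' (measurableSet_Ioi.prod measurableSet_Ioi)]
    apply Filter.Eventually.of_forall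
    rintro ⟨u, v⟩ ⟨hu, hv⟩
    simp only [mem_Ioi] at hu hv
    rw [Real.norm_eq_abs, abs_of_pos (Real.exp_pos _), ← Real.exp_add, ← Real.exp_add]
    apply Real.exp_le_exp.mpr
    nlinarith [sq_nonneg (Ω + u * a + v * b + Ω), mul_pos (mul_pos hu ha) (mul_pos hv hb),
      sq_nonneg (u * a), sq_nonneg (v * b)]

lemma integral_gauss2d {k a b : ℝ} (hk : 0 < k) (ha : 0 < a) (hb : 0 < b) (hab : a * b = 1)
    (Ω : ℝ) :
    ∫ z in Ioi (0:ℝ) ×ˢ Ioi (0:ℝ), Real.exp (-k * (Ω + z.1 * a + z.2 * b) ^ 2)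
      = Real.exp (-k * Ω ^ 2) / (2 * k) - Ω * E k Ω := by
  have hint := integrableOn_gauss2d (a := a) (b := b) hk ha hb Ω
  rw [MeasureTheory.Measure.volume_eq_prod] at hint ⊢
  rw [setIntegral_prod _ hint]
  have inner : ∀ u : ℝ, (∫ v in Ioi (0:ℝ), Real.exp (-k * (Ω + u * a + v * b) ^ 2))
      = b⁻¹ * E k (Ω + u * a) := by
    intro u
    have := integral_comp_mul_right_Ioi
      (fun t : ℝ => Real.exp (-k * (Ω + u * a + t) ^ 2)) 0 hb
    simp only [zero_mul, smul_eq_mul] at this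
    rw [this]
    congr 1
    simp_rw [add_comm (Ω + u * a)]
    rw [integral_comp_add_right_Ioi (fun t : ℝ => Real.exp (-k * t ^ 2)) 0 (Ω + u * a), zero_add]
    rfl
  simp_rw [inner]
  rw [integral_const_mul]
  have := integral_comp_mul_right_Ioi (fun t : ℝ => E k (Ω + t)) 0 ha
  simp only [zero_mul, smul_eq_mul] at this
  rw [this]
  have h2 : (∫ x in Ioi (0:ℝ), E k (Ω + x)) = ∫ x in Ioi Ω, E k x := by
    have := integral_comp_add_right_Ioi (E k) 0 Ω
    simp only [zero_add] at this
    rw [← this]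
    simp_rw [add_comm Ω]
  rw [h2, integral_E hk, ← mul_assoc]
  have hba : b⁻¹ * a⁻¹ = 1 := by rw [← mul_inv, mul_comm b a, hab, inv_one]
  rw [hba, one_mul]

lemma step_on_cell {c : ℝ} (hc : 0 < c) {n : ℕ} {u : ℝ}
    (hu : u ∈ Ioc (c * n) (c * (n + 1))) : step c u = c * ((n : ℝ) + 1 / 2) := by
  have hceil : ⌈u / c⌉ = (n : ℤ) + 1 := by
    rw [Int.ceil_eq_iff]
    constructor
    · push_cast
      rw [lt_div_iff₀ hc]
      simpa [mul_comm] using hu.1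
    · push_cast
      rw [div_le_iff₀ hc]
      simpa [mul_comm] using hu.2
  rw [step, hceil]
  push_cast
  ring

lemma abs_step_sub_le {c : ℝ} (hc : 0 < c) (u : ℝ) : |step c u - u| ≤ c / 2 := by
  have h1 : u / c ≤ (⌈u / c⌉ : ℝ) := Int.le_ceil _
  have h2 : (⌈u / c⌉ : ℝ) < u / c + 1 := Int.ceil_lt_add_one _
  rw [div_le_iff₀ hc] at h1
  have h2' : c * (⌈u / c⌉ : ℝ) < u + c := by
    have := (mul_lt_mul_iff_right₀ hc).mpr h2
    calc c * (⌈u / c⌉ : ℝ) < c * (u / c + 1) := this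
      _ = u + c := by field_simp
  rw [abs_le, step]
  constructor <;> nlinarith

lemma iUnion_cells {c : ℝ} (hc : 0 < c) :
    (⋃ n : ℕ, Ioc (c * n) (c * (n + 1))) = Ioi (0 : ℝ) := by
  ext u
  simp only [mem_iUnion, mem_Ioc, mem_Ioi]
  constructor
  · rintro ⟨n, h1, _⟩
    exact lt_of_le_of_lt (by positivity) h1
  · intro hu
    have hm : 0 < ⌈u / c⌉ := Int.ceil_pos.mpr (by positivity)
    refine ⟨(⌈u / c⌉ - 1).toNat, ?_, ?_⟩
    · have hcast : ((⌈u / c⌉ - 1).toNat : ℝ) = (⌈u / c⌉ : ℝ) - 1 := by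
        have := Int.toNat_of_nonneg (by omega : (0:ℤ) ≤ ⌈u / c⌉ - 1)
        exact_mod_cast congrArg (Int.cast : ℤ → ℝ) this
      rw [hcast]
      have h2 : (⌈u / c⌉ : ℝ) < u / c + 1 := Int.ceil_lt_add_one _
      have h3 := (mul_lt_mul_iff_right₀ hc).mpr h2
      have h4 : c * (u / c + 1) = u + c := by field_simp
      nlinarith [h3, h4]
    · have hcast : ((⌈u / c⌉ - 1).toNat : ℝ) + 1 = (⌈u / c⌉ : ℝ) := by
        have := Int.toNat_of_nonneg (by omega : (0:ℤ) ≤ ⌈u / c⌉ - 1)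
        have : (((⌈u / c⌉ - 1).toNat : ℤ) : ℝ) = ((⌈u / c⌉ - 1 : ℤ) : ℝ) := by exact_mod_cast congrArg (Int.cast : ℤ → ℝ) this
        push_cast at this ⊢
        linarith
      rw [hcast]
      have h1 : u / c ≤ (⌈u / c⌉ : ℝ) := Int.le_ceil _
      rw [div_le_iff₀ hc] at h1
      linarith [h1]

lemma disjoint_cells {c : ℝ} (hc : 0 < c) {n n' : ℕ} (h : n ≠ n') :
    Disjoint (Ioc (c * n) (c * (n + 1))) (Ioc (c * n') (c * (n' + 1))) := by
  have key : ∀ {a b : ℕ}, a < b →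
      Disjoint (Ioc (c * a) (c * (a + 1))) (Ioc (c * b) (c * (b + 1))) := by
    intro a b hab
    apply Set.disjoint_left.mpr
    rintro x ⟨_, h2⟩ ⟨h3, _⟩
    have : (a : ℝ) + 1 ≤ (b : ℝ) := by exact_mod_cast hab
    nlinarith
  rcases h.lt_or_gt with h' | h'
  · exact key h'
  · exact (key h').symm

lemma measurable_step (c : ℝ) : Measurable (step c) := by
  unfold step
  apply Measurable.const_mul
  exact (measurable_from_top.comp (Int.measurable_ceil.comp (measurable_id.div_const c))).sub
    measurable_const

lemma bound_step {k a b c Ω : ℝ} (hk : 0 < k) (ha : 0 < a) (hb : 0 < b) (hc : 0 < c)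
    (u v : ℝ) :
    Real.exp (-k * (Ω + step c u * a + step c v * b) ^ 2)
      ≤ Real.exp (k * (c * (a + b) / 2) ^ 2) * Real.exp (-(k / 2) * (Ω + u * a + v * b) ^ 2) := by
  rw [← Real.exp_add, Real.exp_le_exp]
  have h1 := abs_step_sub_le hc u
  have h2 := abs_step_sub_le hc v
  rw [abs_le] at h1 h2
  obtain ⟨d, hd⟩ : ∃ d : ℝ, d = (step c u - u) * a + (step c v - v) * b := ⟨_, rfl⟩
  obtain ⟨x, hxdef⟩ : ∃ x : ℝ, x = Ω + u * a + v * b := ⟨_, rfl⟩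
  rw [← hxdef]
  have hub : d ≤ c * (a + b) / 2 := by
    have p1 := mul_le_mul_of_nonneg_right h1.2 ha.le
    have p2 := mul_le_mul_of_nonneg_right h2.2 hb.le
    rw [hd]; nlinarith
  have hlb : -(c * (a + b) / 2) ≤ d := by
    have p1 := mul_le_mul_of_nonneg_right h1.1 ha.le
    have p2 := mul_le_mul_of_nonneg_right h2.1 hb.le
    rw [hd]; nlinarith
  have hdle : d ^ 2 ≤ (c * (a + b) / 2) ^ 2 := sq_le_sq' hlb hub
  have hx : Ω + step c u * a + step c v * b = x + d := by rw [hd, hxdef]; ring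
  rw [hx]
  clear hd hxdef
  have h5 : x ^ 2 / 2 - (c * (a + b) / 2) ^ 2 ≤ (x + d) ^ 2 := by
    nlinarith [sq_nonneg (x + 2 * d), hdle]
  nlinarith [mul_le_mul_of_nonneg_left h5 hk.le]

lemma measurable_G {k a b c Ω : ℝ} :
    Measurable (fun z : ℝ × ℝ => Real.exp (-k * (Ω + step c z.1 * a + step c z.2 * b) ^ 2)) := by
  apply Real.measurable_exp.comp
  apply Measurable.const_mul
  apply Measurable.pow_const
  exact (measurable_const.add (((measurable_step c).comp measurable_fst).mul_const a)).add
    (((measurable_step c).comp measurable_snd).mul_const b)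

lemma integrableOn_G {k a b c Ω : ℝ} (hk : 0 < k) (ha : 0 < a) (hb : 0 < b) (hc : 0 < c) :
    IntegrableOn (fun z : ℝ × ℝ => Real.exp (-k * (Ω + step c z.1 * a + step c z.2 * b) ^ 2))
      (Ioi 0 ×ˢ Ioi 0) := by
  apply Integrable.mono' (((integrableOn_gauss2d (k := k / 2) (by linarith) ha hb
    Ω).const_mul (Real.exp (k * (c * (a + b) / 2) ^ 2))))
    measurable_G.aestronglyMeasurable.restrict
  apply Filter.Eventually.of_forall
  rintro ⟨u, v⟩
  rw [Real.norm_eq_abs, abs_of_pos (Real.exp_pos _)]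
  exact bound_step hk ha hb hc u v

lemma sum_eq_integral {k a b c Ω : ℝ} (hk : 0 < k) (ha : 0 < a) (hb : 0 < b) (hc : 0 < c) :
    c ^ 2 * ∑' p : ℕ × ℕ,
        Real.exp (-k * (Ω + c * ((p.1 : ℝ) + 1 / 2) * a + c * ((p.2 : ℝ) + 1 / 2) * b) ^ 2)
      = ∫ z in Ioi (0:ℝ) ×ˢ Ioi (0:ℝ),
          Real.exp (-k * (Ω + step c z.1 * a + step c z.2 * b) ^ 2) := by
  set S : ℕ → Set ℝ := fun n => Ioc (c * n) (c * (n + 1)) with hS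
  have hcell : ∀ p : ℕ × ℕ, MeasurableSet (S p.1 ×ˢ S p.2) :=
    fun p => measurableSet_Ioc.prod measurableSet_Ioc
  have hdisj : Pairwise (Function.onFun Disjoint fun p : ℕ × ℕ => S p.1 ×ˢ S p.2) := by
    rintro ⟨n, m⟩ ⟨n', m'⟩ hne
    simp only [Function.onFun]
    rw [Set.disjoint_prod]
    rcases eq_or_ne n n' with rfl | h1
    · right
      apply disjoint_cells hc
      intro h; exact hne (by simp [h])
    · left; exact disjoint_cells hc h1
  have hUnion : (⋃ p : ℕ × ℕ, S p.1 ×ˢ S p.2) = Ioi (0:ℝ) ×ˢ Ioi (0:ℝ) := by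
    ext z
    simp only [mem_iUnion, Set.mem_prod, Prod.exists]
    constructor
    · rintro ⟨n, m, hn, hm⟩
      rw [← iUnion_cells hc]
      exact ⟨mem_iUnion.mpr ⟨n, hn⟩, mem_iUnion.mpr ⟨m, hm⟩⟩
    · rintro ⟨hz1, hz2⟩
      rw [← iUnion_cells hc] at hz1 hz2
      obtain ⟨n, hn⟩ := mem_iUnion.mp hz1
      obtain ⟨m, hm⟩ := mem_iUnion.mp hz2
      exact ⟨n, m, hn, hm⟩
  have hint := integrableOn_G (k := k) (a := a) (b := b) (c := c) (Ω := Ω) hk ha hb hc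
  rw [← hUnion] at hint ⊢
  rw [integral_iUnion hcell hdisj hint]
  have hval : ∀ p : ℕ × ℕ, (∫ z in S p.1 ×ˢ S p.2,
      Real.exp (-k * (Ω + step c z.1 * a + step c z.2 * b) ^ 2))
      = c ^ 2 * Real.exp
          (-k * (Ω + c * ((p.1 : ℝ) + 1 / 2) * a + c * ((p.2 : ℝ) + 1 / 2) * b) ^ 2) := by
    rintro ⟨n, m⟩
    rw [setIntegral_congr_fun (hcell (n, m)) (g := fun _ =>
      Real.exp (-k * (Ω + c * ((n : ℝ) + 1 / 2) * a + c * ((m : ℝ) + 1 / 2) * b) ^ 2))]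
    · rw [setIntegral_const]
      have hvol : volume (S n ×ˢ S m) = ENNReal.ofReal (c ^ 2) := by
        rw [Measure.volume_eq_prod, Measure.prod_prod, hS]
        simp only [Real.volume_Ioc]
        rw [← ENNReal.ofReal_mul (by linarith)]
        congr 1
        ring
      rw [measureReal_def, hvol, ENNReal.toReal_ofReal (by positivity), smul_eq_mul]
    · rintro ⟨u, v⟩ ⟨hu, hv⟩
      simp only
      rw [step_on_cell hc hu, step_on_cell hc hv]
  rw [tsum_congr hval, tsum_mul_left]

lemma tendsto_step (u : ℝ) : Tendsto (fun c => step c u) (𝓝[>] (0:ℝ)) (𝓝 u) := by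
  have hlow : Tendsto (fun c : ℝ => u - c / 2) (𝓝[>] (0:ℝ)) (𝓝 u) := by
    have : Tendsto (fun c : ℝ => u - c / 2) (𝓝 (0:ℝ)) (𝓝 (u - 0 / 2)) := by
      exact (tendsto_const_nhds.sub ((continuous_id.div_const 2).tendsto 0))
    simpa using this.mono_left nhdsWithin_le_nhds
  have hhigh : Tendsto (fun c : ℝ => u + c / 2) (𝓝[>] (0:ℝ)) (𝓝 u) := by
    have : Tendsto (fun c : ℝ => u + c / 2) (𝓝 (0:ℝ)) (𝓝 (u + 0 / 2)) :=
      (tendsto_const_nhds.add ((continuous_id.div_const 2).tendsto 0))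
    simpa using this.mono_left nhdsWithin_le_nhds
  apply tendsto_of_tendsto_of_tendsto_of_le_of_le' hlow hhigh
  · filter_upwards [self_mem_nhdsWithin] with c hc
    have := abs_step_sub_le (mem_Ioi.mp hc) u
    rw [abs_le] at this
    linarith [this.1]
  · filter_upwards [self_mem_nhdsWithin] with c hc
    have := abs_step_sub_le (mem_Ioi.mp hc) u
    rw [abs_le] at this
    linarith [this.2]

lemma tendsto_integral_G {k a b Ω : ℝ} (hk : 0 < k) (ha : 0 < a) (hb : 0 < b) :
    Tendsto (fun c : ℝ => ∫ z in Ioi (0:ℝ) ×ˢ Ioi (0:ℝ),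
        Real.exp (-k * (Ω + step c z.1 * a + step c z.2 * b) ^ 2))
      (𝓝[>] (0:ℝ))
      (𝓝 (∫ z in Ioi (0:ℝ) ×ˢ Ioi (0:ℝ), Real.exp (-k * (Ω + z.1 * a + z.2 * b) ^ 2))) := by
  apply tendsto_integral_filter_of_dominated_convergence
    (bound := fun z : ℝ × ℝ => Real.exp (k * ((a + b) / 2) ^ 2) *
      Real.exp (-(k / 2) * (Ω + z.1 * a + z.2 * b) ^ 2))
  · exact Filter.Eventually.of_forall fun c => measurable_G.aestronglyMeasurable.restrict
  · have hIoc : Ioc (0:ℝ) 1 ∈ 𝓝[>] (0:ℝ) :=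
      Ioc_mem_nhdsGT_of_mem ⟨le_refl 0, zero_lt_one⟩
    filter_upwards [hIoc] with c hc
    apply Filter.Eventually.of_forall
    rintro ⟨u, v⟩
    rw [Real.norm_eq_abs, abs_of_pos (Real.exp_pos _)]
    calc Real.exp (-k * (Ω + step c u * a + step c v * b) ^ 2)
        ≤ Real.exp (k * (c * (a + b) / 2) ^ 2) *
            Real.exp (-(k / 2) * (Ω + u * a + v * b) ^ 2) :=
          bound_step hk ha hb hc.1 u v
      _ ≤ Real.exp (k * ((a + b) / 2) ^ 2) *
            Real.exp (-(k / 2) * (Ω + u * a + v * b) ^ 2) := by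
          apply mul_le_mul_of_nonneg_right _ (Real.exp_pos (-(k / 2) * (Ω + u * a + v * b) ^ 2)).le
          rw [Real.exp_le_exp]
          apply mul_le_mul_of_nonneg_left _ hk.le
          have h1 : 0 ≤ c * (a + b) / 2 := by nlinarith [mul_pos hc.1 (add_pos ha hb)]
          have h2 : c * (a + b) / 2 ≤ (a + b) / 2 := by nlinarith [hc.1.le, hc.2, ha.le, hb.le]
          nlinarith
  · exact (integrableOn_gauss2d (k := k / 2) (by linarith) ha hb Ω).const_mul _
  · apply Filter.Eventually.of_forall
    rintro ⟨u, v⟩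
    have h1 : Tendsto (fun c : ℝ => -k * (Ω + step c u * a + step c v * b) ^ 2) (𝓝[>] (0:ℝ))
        (𝓝 (-k * (Ω + u * a + v * b) ^ 2)) := by
      apply Tendsto.const_mul
      exact (((tendsto_const_nhds.add ((tendsto_step u).mul_const a)).add
        ((tendsto_step v).mul_const b)).pow 2)
    exact (Real.continuous_exp.tendsto _).comp h1

end TwistedAux

set_option maxHeartbeats 1000000 in
theorem twisted_response_large_circumference_limit (σ β Ω : ℝ) (hσ : 0 < σ) :
    Tendsto (fun L : ℝ => (4 * Real.sqrt Real.pi * σ / L ^ 2) *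
        ∑' p : ℕ × ℕ, Real.exp (-σ ^ 2 *
          (Ω + (2 * Real.pi / L) * (((p.1 : ℝ) + 1 / 2) * Real.exp β
            + ((p.2 : ℝ) + 1 / 2) * Real.exp (-β))) ^ 2))
      atTop
      (𝓝 (1 / (2 * Real.pi * σ) *
        (Real.exp (-σ ^ 2 * Ω ^ 2) / Real.sqrt Real.pi - σ * Ω * erfc (σ * Ω)))) := by
  open MeasureTheory Set TwistedAux in
  have hk : (0:ℝ) < σ ^ 2 := by positivity
  have ha : (0:ℝ) < Real.exp β := Real.exp_pos β
  have hb : (0:ℝ) < Real.exp (-β) := Real.exp_pos (-β)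
  have hab : Real.exp β * Real.exp (-β) = 1 := by
    rw [← Real.exp_add]; simp
  have hπ : (0:ℝ) < Real.pi := Real.pi_pos
  set a := Real.exp β with hadef
  set b := Real.exp (-β) with hbdef
  -- limit of the integrals
  have hmain := (TwistedAux.tendsto_integral_G (k := σ ^ 2) (a := a) (b := b) (Ω := Ω)
    hk ha hb).comp
    (show Tendsto (fun L : ℝ => 2 * Real.pi / L) atTop (𝓝[>] (0:ℝ)) by
      rw [tendsto_nhdsWithin_iff]
      constructor
      · simpa using tendsto_const_nhds.div_atTop (tendsto_id (α := ℝ))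
      · filter_upwards [eventually_gt_atTop (0:ℝ)] with L hL
        exact mem_Ioi.mpr (div_pos (by positivity) hL))
  rw [TwistedAux.integral_gauss2d hk ha hb hab Ω] at hmain
  -- replace integrals by Riemann sums
  have heq : (fun c : ℝ => ∫ z in Ioi (0:ℝ) ×ˢ Ioi (0:ℝ),
        Real.exp (-σ ^ 2 * (Ω + step c z.1 * a + step c z.2 * b) ^ 2)) ∘
          (fun L : ℝ => 2 * Real.pi / L)
      =ᶠ[atTop] fun L : ℝ => (2 * Real.pi / L) ^ 2 * ∑' p : ℕ × ℕ, Real.exp (-σ ^ 2 *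
          (Ω + (2 * Real.pi / L) * (((p.1 : ℝ) + 1 / 2) * a
            + ((p.2 : ℝ) + 1 / 2) * b)) ^ 2) := by
    filter_upwards [eventually_gt_atTop (0:ℝ)] with L hL
    have hc : 0 < 2 * Real.pi / L := div_pos (by positivity) hL
    rw [Function.comp_apply, ← TwistedAux.sum_eq_integral hk ha hb hc]
    congr 1
    apply tsum_congr
    intro p
    congr 1
    ring
  have hmain2 := (hmain.congr' heq).const_mul (Real.sqrt Real.pi * σ / Real.pi ^ 2)
  have hval : 1 / (2 * Real.pi * σ) *
        (Real.exp (-σ ^ 2 * Ω ^ 2) / Real.sqrt Real.pi - σ * Ω * erfc (σ * Ω))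
      = Real.sqrt Real.pi * σ / Real.pi ^ 2 *
        (Real.exp (-σ ^ 2 * Ω ^ 2) / (2 * σ ^ 2) - Ω * E (σ ^ 2) Ω) := by
    have hE : E (σ ^ 2) Ω = σ⁻¹ * ∫ t in Ioi (σ * Ω), Real.exp (-t ^ 2) := by
      have h := integral_comp_mul_left_Ioi (fun t : ℝ => Real.exp (-t ^ 2)) Ω hσ
      simp only [smul_eq_mul] at h
      rw [E, ← h]
      apply setIntegral_congr_fun measurableSet_Ioi
      intro t _
      show Real.exp (-σ ^ 2 * t ^ 2) = Real.exp (-(σ * t) ^ 2)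
      congr 1
      ring
    rw [hE, erfc]
    obtain ⟨s, hsqrt, hs0, hs⟩ : ∃ s : ℝ, Real.sqrt Real.pi = s ∧ 0 < s ∧ s ^ 2 = Real.pi :=
      ⟨Real.sqrt Real.pi, rfl, Real.sqrt_pos.mpr hπ, Real.sq_sqrt hπ.le⟩
    rw [hsqrt, ← hs]
    field_simp
  rw [hval]
  apply Tendsto.congr' _ hmain2
  filter_upwards [eventually_gt_atTop (0:ℝ)] with L hL
  rw [← mul_assoc]
  congr 1
  rw [div_pow]
  field_simp
  ring
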